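/- arXiv:1308.2853 — 5 statements merged into one kernel-verified Lean document; each statement's English description precedes it below -/
import Mathlib

section
/- If the bipartite graph G(Y,X;A) associated to the support of a matrix A ∈ R^{p×q} has a perfect n-gram matching, then the bipartite graph G(Y,X^{(n)};A^{⊙n}) associated to the n-th Khatri-Rao power of A has a perfect (Y-saturating) matching, where X^{(n)} = [p]^n indexes the rows of A^{⊙n}. -/
/-- Neighbors of a column `j` via the edge set `M` in the support bipartite graph of a matrix. -/
def matchedNeighbors {p q : ℕ} (M : Finset (Fin q × Fin p)) (j : Fin q) : Finset (Fin p) :=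
  Finset.univ.filter fun i => (j, i) ∈ M

/-- `M` is a perfect `n`-gram matching for the bipartite graph `G(Y,X;A)` where `Y = [q]`
indexes columns, `X = [p]` indexes rows, and `(j,i)` is an edge iff `A i j ≠ 0`. -/
def IsPerfectNGramMatchingOf {p q : ℕ} (A : Matrix (Fin p) (Fin q) ℝ)
    (M : Finset (Fin q × Fin p)) (n : ℕ) : Prop :=
  (∀ e ∈ M, A e.2 e.1 ≠ 0) ∧ (∀ j : Fin q, (matchedNeighbors M j).card = n) ∧
    ∀ j₁ j₂ : Fin q, j₁ ≠ j₂ →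
      (matchedNeighbors M j₁ ∩ matchedNeighbors M j₂).card <
        min (matchedNeighbors M j₁).card (matchedNeighbors M j₂).card

/-! Send each column `j` to the increasing enumeration of its matched neighbourhood. Every entry
of that `n`-tuple is a matched, hence nonzero, entry of column `j`, so the product is nonzero.
The tuple determines the neighbourhood as its range, and distinct columns have distinct
neighbourhoods because their intersection is strictly smaller than either of them. -/

open Finset

theorem Finset.injective_of_card_inter_lt_min {ι α : Type*} [DecidableEq α] {s : ι → Finset α}
    (h : ∀ i j, i ≠ j → #(s i ∩ s j) < min #(s i) #(s j)) : Function.Injective s := by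
  intro i j hij
  by_contra hne
  simpa [hij] using h i j hne

theorem Finset.eq_of_orderEmbOfFin_eq {α : Type*} [LinearOrder α] {s t : Finset α} {k : ℕ}
    (hs : #s = k) (ht : #t = k) (h : ⇑(s.orderEmbOfFin hs) = ⇑(t.orderEmbOfFin ht)) : s = t :=
  Finset.coe_injective <| by rw [← range_orderEmbOfFin s hs, ← range_orderEmbOfFin t ht, h]

@[simp]
theorem mem_matchedNeighbors {p q : ℕ} {M : Finset (Fin q × Fin p)} {j : Fin q} {i : Fin p} :
    i ∈ matchedNeighbors M j ↔ (j, i) ∈ M := by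
  simp [matchedNeighbors]

/-- If the support bipartite graph `G(Y,X;A)` of `A ∈ ℝ^{p×q}` has a perfect `n`-gram
matching, then the bipartite graph `G(Y,X^{(n)};A^{⊙n})` of the `n`-th Khatri-Rao power
(whose entry at row `(i₁,…,iₙ)` and column `j` is `∏ₖ A_{iₖ j}`) has a perfect
(`Y`-saturating) matching: an injective assignment of a row `n`-tuple with nonzero entry
to each column. -/
theorem khatriRao_perfect_matching_of_perfect_ngram_matching
    {p q n : ℕ} (A : Matrix (Fin p) (Fin q) ℝ)
    (h : ∃ M : Finset (Fin q × Fin p), IsPerfectNGramMatchingOf A M n) :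
    ∃ f : Fin q → (Fin n → Fin p), Function.Injective f ∧
      ∀ j : Fin q, (∏ k : Fin n, A (f j k) j) ≠ 0 := by
  obtain ⟨M, hnonzero, hcard, hinter⟩ := h
  refine ⟨fun j => (matchedNeighbors M j).orderEmbOfFin (hcard j), fun j₁ j₂ heq => ?_, fun j => ?_⟩
  · exact injective_of_card_inter_lt_min hinter (eq_of_orderEmbOfFin_eq _ _ heq)
  · refine prod_ne_zero_iff.mpr fun k _ => hnonzero (j, _) ?_
    exact mem_matchedNeighbors.mp (orderEmbOfFin_mem _ (hcard j) k)
end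

section
/- Suppose the bipartite graph G(Y,X;A) of a matrix A ∈ R^{p×q} has a perfect n-gram matching and A is generic. Then the n-gram (Khatri-Rao power) matrix A^{⊙n} ∈ R^{p^n×q} is full column rank, almost surely. -/
/-!
Pick for each column `j` the row `(i₁,…,iₙ)` of `A^{⊙n}` listing its matched neighbours `N(j)`.
The resulting `q × q` minor has entries `∏ₖ A (iₖ) j'`. Specialise the indeterminates to the
indicator of the matching: the entry `(j, j')` becomes `1` iff `N(j) ⊆ N(j')`, which the
matching condition allows only for `j = j'`. So the minor specialises to the identity, its
determinant is a nonzero polynomial, and the columns are independent.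
-/

open MvPolynomial

/-- `M` is a perfect `n`-gram matching for the bipartite graph with sparsity pattern `P`
(columns `[q]` on the left, rows `[p]` on the right, edge `(j,i)` iff `(i,j) ∈ P`). -/
def IsPerfectNGramMatchingPat {p q : ℕ} (P : Finset (Fin p × Fin q))
    (M : Finset (Fin q × Fin p)) (n : ℕ) : Prop :=
  (∀ e ∈ M, (e.2, e.1) ∈ P) ∧ (∀ j : Fin q, (matchedNeighbors M j).card = n) ∧
    ∀ j₁ j₂ : Fin q, j₁ ≠ j₂ →
      (matchedNeighbors M j₁ ∩ matchedNeighbors M j₂).card <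
        min (matchedNeighbors M j₁).card (matchedNeighbors M j₂).card

theorem IsPerfectNGramMatchingPat.matchedNeighbors_subset_iff {p q n : ℕ}
    {P : Finset (Fin p × Fin q)} {M : Finset (Fin q × Fin p)}
    (hM : IsPerfectNGramMatchingPat P M n) {j₁ j₂ : Fin q} :
    matchedNeighbors M j₁ ⊆ matchedNeighbors M j₂ ↔ j₁ = j₂ := by
  refine ⟨fun hsub => ?_, fun h => h ▸ subset_rfl⟩
  by_contra hne
  have hlt := hM.2.2 j₁ j₂ hne
  rw [Finset.inter_eq_left.2 hsub] at hlt
  exact (min_le_left _ _).not_gt hlt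

theorem Matrix.det_ne_zero_of_map_eq_one {R S m : Type*} [CommRing R] [CommRing S]
    [Nontrivial S] [Fintype m] [DecidableEq m] (f : R →+* S) {B : Matrix m m R}
    (hB : B.map f = 1) : B.det ≠ 0 := fun h => by
  simpa [h, hB] using (f.map_det B).symm

theorem linearIndependent_of_det_submatrix_ne_zero {R ι κ : Type*} [CommRing R] [IsDomain R]
    [Fintype ι] [DecidableEq ι] (v : ι → κ → R) (r : ι → κ)
    (h : (Matrix.of fun a b => v b (r a)).det ≠ 0) : LinearIndependent R v :=
  LinearIndependent.of_comp (LinearMap.funLeft R R r)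
    (Matrix.linearIndependent_cols_of_det_ne_zero h)

/-- Genericity is modelled by independent indeterminates on the support pattern `P`. -/
theorem khatriRao_full_column_rank_of_perfect_ngram_matching (p q n : ℕ)
    (P : Finset (Fin p × Fin q))
    (M : Finset (Fin q × Fin p)) (hM : IsPerfectNGramMatchingPat P M n)
    (A : Matrix (Fin p) (Fin q) (MvPolynomial (Fin p × Fin q) ℝ))
    (hA1 : ∀ i j, (i, j) ∈ P → A i j = MvPolynomial.X (i, j))
    (hA2 : ∀ i j, (i, j) ∉ P → A i j = 0) :
    LinearIndependent (MvPolynomial (Fin p × Fin q) ℝ)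
      (fun j : Fin q => fun t : Fin n → Fin p => ∏ k : Fin n, A (t k) j) := by
  classical
  let N := matchedNeighbors M
  let x : Fin p × Fin q → ℝ := fun e => if e.1 ∈ N e.2 then 1 else 0
  have heval : ∀ i j, eval x (A i j) = if i ∈ N j then 1 else 0 := by
    intro i j
    by_cases hP : (i, j) ∈ P
    · rw [hA1 i j hP, eval_X]
    · have hi : i ∉ N j := fun hi => hP (hM.1 (j, i) (by simpa [N, matchedNeighbors] using hi))
      rw [hA2 i j hP, map_zero, if_neg hi]
  let t j := (N j).orderEmbOfFin (hM.2.1 j)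
  have hrow : ∀ j₁ j₂, (∀ k, t j₁ k ∈ N j₂) ↔ j₁ = j₂ := fun j₁ j₂ => by
    rw [← hM.matchedNeighbors_subset_iff, ← Finset.coe_subset,
      ← Finset.range_orderEmbOfFin _ (hM.2.1 j₁), Set.range_subset_iff]
    rfl
  refine linearIndependent_of_det_submatrix_ne_zero _ (fun j => t j)
    (Matrix.det_ne_zero_of_map_eq_one (eval x) ?_)
  ext j₁ j₂
  simp only [Matrix.map_apply, Matrix.of_apply, map_prod, heval, Fintype.prod_boole, hrow,
    Matrix.one_apply]
end

section
/- Consider a random bipartite graph G(W,Z;E) with |W| = w ≤ cz for constant 0 < c < 1, where each i ∈ W is independently connected to a uniformly random set of d_i ≥ 1 + β log z distinct nodes of Z (β > 0). Then with probability at least 1 − O(z^{−β log(1/c)}), the graph has a W-saturating perfect matching. -/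
/-!
If the graph has no `W`-saturating matching, Hall's theorem gives a nonempty `S ⊆ W` whose
neighbourhoods all lie in a set `T ⊆ Z` with `|T| = |S| = k`. For fixed `S` and `T` this has
probability `∏_{i ∈ S} C(k, d_i) / C(z, d_i) ≤ (k/z)^{δk}`, where `δ = 1 + β log z ≤ d_i`.
A union bound over the `C(w,k) C(z,k) ≤ (e w/k)^k (e z/k)^k` pairs, together with
`k ≤ w ≤ c z`, bounds the failure probability by `∑_k (e² c^{δ-1})^k`, and
`c^{δ-1} = c^{β log z} = z^{-β log(1/c)}`; for large `z` the geometric series is at most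
twice its first term.
-/

open Finset Real

namespace Nat

theorem choose_mul_pow_le_choose_mul_pow {m n : ℕ} (hmn : m ≤ n) (k : ℕ) :
    m.choose k * n ^ k ≤ n.choose k * m ^ k := by
  have hdesc : m.descFactorial k * n ^ k ≤ n.descFactorial k * m ^ k := by
    induction k with
    | zero => simp
    | succ k ih =>
      have step : (m - k) * n ≤ (n - k) * m := by
        rw [Nat.sub_mul, Nat.sub_mul, mul_comm m n]
        exact Nat.sub_le_sub_left (Nat.mul_le_mul_left k hmn) _
      calc m.descFactorial (k + 1) * n ^ (k + 1)
          = ((m - k) * n) * (m.descFactorial k * n ^ k) := by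
            rw [descFactorial_succ, pow_succ]; ring
        _ ≤ ((n - k) * m) * (n.descFactorial k * m ^ k) := Nat.mul_le_mul step ih
        _ = n.descFactorial (k + 1) * m ^ (k + 1) := by
            rw [descFactorial_succ, pow_succ]; ring
  rw [descFactorial_eq_factorial_mul_choose, descFactorial_eq_factorial_mul_choose,
    mul_assoc, mul_assoc] at hdesc
  exact Nat.le_of_mul_le_mul_left hdesc k.factorial_pos

theorem choose_le_exp_mul_div_pow (n k : ℕ) : (n.choose k : ℝ) ≤ (exp 1 * n / k) ^ k := by
  rcases k.eq_zero_or_pos with rfl | hk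
  · simp
  have hk' : (0 : ℝ) < k := by exact_mod_cast hk
  have hkk : (k : ℝ) ^ k / k ! ≤ exp 1 ^ k := by
    rw [← exp_nat_mul, mul_one]
    exact pow_div_factorial_le_exp _ hk'.le k
  calc (n.choose k : ℝ) ≤ (n : ℝ) ^ k / k ! := choose_le_pow_div k n
    _ = ((n : ℝ) / k) ^ k * ((k : ℝ) ^ k / k !) := by
          rw [div_pow]; field_simp
    _ ≤ ((n : ℝ) / k) ^ k * exp 1 ^ k := by gcongr
    _ = (exp 1 * n / k) ^ k := by ring

theorem card_subtype_add_card_subtype_not {X : Type*} [Finite X] (p : X → Prop) :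
    Nat.card {x // p x} + Nat.card {x // ¬ p x} = Nat.card X := by
  classical
  have := Fintype.ofFinite X
  simp only [Nat.card_eq_fintype_card, Fintype.card_subtype_compl]
  have := Fintype.card_subtype_le p
  omega

end Nat

theorem geom_sum_Icc_one_le_two_mul {r : ℝ} (hr0 : 0 ≤ r) (hr : r ≤ 1 / 2) (n : ℕ) :
    ∑ k ∈ Icc 1 n, r ^ k ≤ 2 * r := by
  calc ∑ k ∈ Icc 1 n, r ^ k = ∑ k ∈ Ico 1 (n + 1), r ^ k := rfl
    _ ≤ r ^ 1 / (1 - r) := geom_sum_Ico_le_of_lt_one hr0 (by linarith)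
    _ ≤ 2 * r := by rw [pow_one, div_le_iff₀ (by linarith)]; nlinarith

theorem choose_mul_choose_mul_rpow_pow_le {c δ : ℝ} {m n k : ℕ} (hc : 0 < c) (hδ : 2 ≤ δ)
    (hk : 0 < k) (hkm : k ≤ m) (hmn : (m : ℝ) ≤ c * n) :
    (m.choose k : ℝ) * n.choose k * (((k : ℝ) / n) ^ δ) ^ k ≤ (exp 1 ^ 2 * c ^ (δ - 1)) ^ k := by
  have hk' : (0 : ℝ) < k := by exact_mod_cast hk
  have hkm' : (k : ℝ) ≤ m := by exact_mod_cast hkm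
  have hn : (0 : ℝ) < n := pos_of_mul_pos_right (hk'.trans_le (hkm'.trans hmn)) hc.le
  have hx0 : (0 : ℝ) < k / n := div_pos hk' hn
  have hxc : (k : ℝ) / n ≤ c := (div_le_iff₀ hn).mpr (hkm'.trans hmn)
  have hmc : (m : ℝ) / n ≤ c := (div_le_iff₀ hn).mpr hmn
  have base : exp 1 * m / k * (exp 1 * n / k) * ((k : ℝ) / n) ^ δ ≤ exp 1 ^ 2 * c ^ (δ - 1) :=
    calc exp 1 * m / k * (exp 1 * n / k) * ((k : ℝ) / n) ^ δ
        = exp 1 ^ 2 * ((m : ℝ) / n) * ((k : ℝ) / n) ^ (δ - 2) := by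
          rw [show ((k : ℝ) / n) ^ δ = ((k : ℝ) / n) ^ (2 : ℝ) * ((k : ℝ) / n) ^ (δ - 2) by
            rw [← rpow_add hx0]; ring_nf, rpow_two]
          field_simp
      _ ≤ exp 1 ^ 2 * c * c ^ (δ - 2) := by gcongr
      _ = exp 1 ^ 2 * c ^ (δ - 1) := by
          rw [show δ - 1 = 1 + (δ - 2) by ring, rpow_add hc, rpow_one, mul_assoc]
  calc (m.choose k : ℝ) * n.choose k * (((k : ℝ) / n) ^ δ) ^ k
      ≤ (exp 1 * m / k) ^ k * (exp 1 * n / k) ^ k * (((k : ℝ) / n) ^ δ) ^ k := by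
        gcongr
        · exact Nat.choose_le_exp_mul_div_pow m k
        · exact Nat.choose_le_exp_mul_div_pow n k
    _ = (exp 1 * m / k * (exp 1 * n / k) * ((k : ℝ) / n) ^ δ) ^ k := by rw [mul_pow, mul_pow]
    _ ≤ (exp 1 ^ 2 * c ^ (δ - 1)) ^ k := pow_le_pow_left₀ (by positivity) base k

section Matching

variable {ι α : Type*}

def HasSaturatingMatching (t : ι → Finset α) : Prop :=
  ∃ f : ι → α, Function.Injective f ∧ ∀ i, f i ∈ t i

/-- The sample space of the random bipartite graph: left vertex `i` picks a `d i`-subset of `α`,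
independently and uniformly, so probabilities are proportions of `Neighbourhoods α d`. -/
abbrev Neighbourhoods (α : Type*) (d : ι → ℕ) : Type _ := ∀ i, {U : Finset α // #U = d i}

theorem exists_card_eq_of_not_hasSaturatingMatching [Fintype ι] [Fintype α]
    (hια : Fintype.card ι ≤ Fintype.card α) (t : ι → Finset α)
    (h : ¬ HasSaturatingMatching t) :
    ∃ (S : Finset ι) (T : Finset α), S.Nonempty ∧ #T = #S ∧ ∀ i ∈ S, t i ⊆ T := by
  classical
  rw [HasSaturatingMatching, ← all_card_le_biUnion_card_iff_existsInjective'] at h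
  push Not at h
  obtain ⟨S, hS⟩ := h
  obtain ⟨T, hST, -, hT⟩ := exists_subsuperset_card_eq (subset_univ (S.biUnion t)) hS.le
    ((card_le_univ S).trans hια |>.trans (card_univ (α := α)).ge)
  exact ⟨S, T, card_pos.mp (by omega), hT, fun i hi => (subset_biUnion_of_mem t hi).trans hST⟩

variable [Fintype ι] [DecidableEq ι] [Fintype α] (d : ι → ℕ)

theorem card_neighbourhoods :
    Nat.card (Neighbourhoods α d) = ∏ i, (Fintype.card α).choose (d i) := by
  simp [Nat.card_eq_fintype_card, Fintype.card_finset_len]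

theorem card_forall_mem_subset (S : Finset ι) (T : Finset α) :
    Nat.card {ω : Neighbourhoods α d // ∀ i ∈ S, (ω i : Finset α) ⊆ T} =
      ∏ i, if i ∈ S then (#T).choose (d i) else (Fintype.card α).choose (d i) := by
  rw [Nat.card_congr (Equiv.subtypePiEquivPi (β := fun i => {U : Finset α // #U = d i})
      (p := fun i U => i ∈ S → (U : Finset α) ⊆ T)),
    Nat.card_pi]
  refine prod_congr rfl fun i _ => ?_
  split_ifs with hi
  · simp only [hi, forall_const]
    rw [← card_powersetCard, ← Nat.card_eq_finsetCard]
    exact Nat.card_congr <| (Equiv.subtypeSubtypeEquivSubtypeInter _ (· ⊆ T)).trans <|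
      Equiv.subtypeEquivRight fun U => by rw [mem_powersetCard, and_comm]
  · simp [hi, Nat.card_eq_fintype_card, Fintype.card_finset_len]

theorem card_forall_mem_subset_le {δ : ℝ} (hd : ∀ i, δ ≤ d i) {S : Finset ι} {T : Finset α}
    (hS : S.Nonempty) (hT : #T = #S) :
    (Nat.card {ω : Neighbourhoods α d // ∀ i ∈ S, (ω i : Finset α) ⊆ T} : ℝ) ≤
      (((#S : ℝ) / Fintype.card α) ^ δ) ^ #S * ∏ i, ((Fintype.card α).choose (d i) : ℝ) := by
  set n := Fintype.card α
  set k := #S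
  have hkn : k ≤ n := hT ▸ card_le_univ T
  have hn : (0 : ℝ) < n := by exact_mod_cast hS.card_pos.trans_le hkn
  have hx0 : (0 : ℝ) < k / n := div_pos (by exact_mod_cast hS.card_pos) hn
  have hx1 : (k : ℝ) / n ≤ 1 := div_le_one_of_le₀ (by exact_mod_cast hkn) hn.le
  have factor (i : ι) : (k.choose (d i) : ℝ) ≤ ((k : ℝ) / n) ^ δ * n.choose (d i) :=
    calc (k.choose (d i) : ℝ) ≤ ((k : ℝ) / n) ^ (d i) * n.choose (d i) := by
          rw [div_pow, div_mul_eq_mul_div, le_div_iff₀ (by positivity), mul_comm _ (n.choose _ : ℝ)]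
          exact_mod_cast Nat.choose_mul_pow_le_choose_mul_pow hkn (d i)
      _ ≤ ((k : ℝ) / n) ^ δ * n.choose (d i) := by
          gcongr
          rw [← rpow_natCast]
          exact rpow_le_rpow_of_exponent_ge hx0 hx1 (hd i)
  rw [card_forall_mem_subset, hT]
  push_cast
  calc ∏ i, (if i ∈ S then (k.choose (d i) : ℝ) else n.choose (d i))
      ≤ ∏ i, ((if i ∈ S then ((k : ℝ) / n) ^ δ else 1) * n.choose (d i)) := by
        refine prod_le_prod (fun i _ => by positivity) fun i _ => ?_
        split_ifs
        · exact factor i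
        · rw [one_mul]
    _ = (((k : ℝ) / n) ^ δ) ^ k * ∏ i, (n.choose (d i) : ℝ) := by
        rw [prod_mul_distrib, prod_ite_mem, univ_inter, prod_const]

theorem card_not_hasSaturatingMatching_le {δ : ℝ} (hd : ∀ i, δ ≤ d i)
    (hια : Fintype.card ι ≤ Fintype.card α) :
    (Nat.card {ω : Neighbourhoods α d //
        ¬ HasSaturatingMatching fun i => (ω i : Finset α)} : ℝ) ≤
      ∑ k ∈ Icc 1 (Fintype.card ι), (Fintype.card ι).choose k * (Fintype.card α).choose k *
        (((k : ℝ) / Fintype.card α) ^ δ) ^ k * ∏ i, ((Fintype.card α).choose (d i) : ℝ) := by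
  classical
  set E : Finset ι → Finset α → Finset (Neighbourhoods α d) :=
    fun S T => univ.filter fun ω => ∀ i ∈ S, (ω i : Finset α) ⊆ T
  have hcover : univ.filter (fun ω : Neighbourhoods α d =>
      ¬ HasSaturatingMatching fun i => (ω i : Finset α)) ⊆
      (Icc 1 (Fintype.card ι)).biUnion fun k =>
        (powersetCard k univ ×ˢ powersetCard k univ).biUnion fun p => E p.1 p.2 := by
    intro ω hω
    obtain ⟨S, T, hS, hT, hST⟩ :=
      exists_card_eq_of_not_hasSaturatingMatching hια _ (mem_filter.mp hω).2
    simp only [mem_biUnion, mem_Icc, mem_product, mem_powersetCard, Prod.exists, E, mem_filter]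
    exact ⟨#S, ⟨hS.card_pos, card_le_univ S⟩, S, T, ⟨⟨subset_univ S, rfl⟩, subset_univ T, hT⟩,
      mem_univ ω, hST⟩
  have hE {S : Finset ι} {T : Finset α} (hS : S.Nonempty) (hT : #T = #S) :
      (#(E S T) : ℝ) ≤ (((#S : ℝ) / Fintype.card α) ^ δ) ^ #S *
        ∏ i, ((Fintype.card α).choose (d i) : ℝ) := by
    rw [← Fintype.card_subtype, ← Nat.card_eq_fintype_card]
    exact card_forall_mem_subset_le d hd hS hT
  rw [Nat.card_eq_fintype_card, Fintype.card_subtype]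
  calc _ ≤ ∑ k ∈ Icc 1 (Fintype.card ι),
        ∑ p ∈ powersetCard k univ ×ˢ powersetCard k univ, (#(E p.1 p.2) : ℝ) := by
        exact_mod_cast (card_le_card hcover).trans <|
          card_biUnion_le.trans (sum_le_sum fun _ _ => card_biUnion_le)
    _ ≤ ∑ k ∈ Icc 1 (Fintype.card ι), ∑ _p ∈ powersetCard k univ ×ˢ powersetCard k univ,
        (((k : ℝ) / Fintype.card α) ^ δ) ^ k * ∏ i, ((Fintype.card α).choose (d i) : ℝ) := by
        refine sum_le_sum fun k hk => sum_le_sum fun p hp => ?_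
        simp only [mem_product, mem_powersetCard] at hp
        obtain ⟨⟨-, hS⟩, -, hT⟩ := hp
        have hS' : p.1.Nonempty := card_pos.mp (hS ▸ (mem_Icc.mp hk).1)
        simpa only [hS] using hE hS' (hT.trans hS.symm)
    _ = _ := by
        simp only [sum_const, card_product, card_powersetCard, card_univ, nsmul_eq_mul]
        refine sum_congr rfl fun k _ => ?_
        push_cast
        ring

theorem one_sub_le_card_hasSaturatingMatching_div {c δ : ℝ} (hc0 : 0 < c) (hc1 : c ≤ 1)
    (hδ : 2 ≤ δ) (hd : ∀ i, δ ≤ d i) (hdα : ∀ i, d i ≤ Fintype.card α)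
    (hια : (Fintype.card ι : ℝ) ≤ c * Fintype.card α) (hr : exp 1 ^ 2 * c ^ (δ - 1) ≤ 1 / 2) :
    1 - 2 * exp 1 ^ 2 * c ^ (δ - 1) ≤
      (Nat.card {ω : Neighbourhoods α d // HasSaturatingMatching fun i => (ω i : Finset α)} : ℝ) /
        Nat.card (Neighbourhoods α d) := by
  set r := exp 1 ^ 2 * c ^ (δ - 1)
  set N : ℝ := ∏ i, ((Fintype.card α).choose (d i) : ℝ)
  have hN : 0 < N := prod_pos fun i _ => by exact_mod_cast Nat.choose_pos (hdα i)
  have htotal : (Nat.card (Neighbourhoods α d) : ℝ) = N := by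
    rw [card_neighbourhoods]; push_cast; rfl
  have hια' : Fintype.card ι ≤ Fintype.card α := by
    exact_mod_cast hια.trans (mul_le_of_le_one_left (by positivity) hc1)
  have hbad : (Nat.card {ω : Neighbourhoods α d //
      ¬ HasSaturatingMatching fun i => (ω i : Finset α)} : ℝ) ≤ 2 * r * N :=
    calc _ ≤ _ := card_not_hasSaturatingMatching_le d hd hια'
      _ ≤ ∑ k ∈ Icc 1 (Fintype.card ι), r ^ k * N := by
          refine sum_le_sum fun k hk => ?_
          gcongr
          exact choose_mul_choose_mul_rpow_pow_le hc0 hδ (mem_Icc.mp hk).1 (mem_Icc.mp hk).2 hια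
      _ = (∑ k ∈ Icc 1 (Fintype.card ι), r ^ k) * N := (sum_mul ..).symm
      _ ≤ 2 * r * N := by gcongr; exact geom_sum_Icc_one_le_two_mul (by positivity) hr _
  have hsplit := Nat.card_subtype_add_card_subtype_not
    (fun ω : Neighbourhoods α d => HasSaturatingMatching fun i => (ω i : Finset α))
  rw [htotal, le_div_iff₀ hN]
  rw [← Nat.cast_inj (R := ℝ), Nat.cast_add, htotal] at hsplit
  linarith

end Matching

theorem Real.rpow_mul_log_comm (β : ℝ) {a b : ℝ} (ha : 0 < a) (hb : 0 < b) :
    a ^ (β * log b) = b ^ (β * log a) := by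
  rw [rpow_def_of_pos ha, rpow_def_of_pos hb]
  ring_nf

/-- Existence of a perfect matching for random bipartite graphs: for constants
`0 < c < 1` and `β > 0` there are constants `K > 0` and `C` such that for every random
bipartite graph `G(W,Z;E)` with `|W| = w ≤ c·z`, `z ≥ C`, in which each left vertex `i`
is independently connected to a uniformly random set of `d i ≥ 1 + β log z` distinct
right vertices, the probability that the graph has a `W`-saturating perfect matching is
at least `1 − K·z^{−β log(1/c)}`. -/
theorem random_perfect_matching_whp (c β : ℝ) (hc0 : 0 < c) (hc1 : c < 1) (hβ : 0 < β) :
    ∃ K C : ℝ, 0 < K ∧ ∀ (w z : ℕ) (d : Fin w → ℕ),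
      C ≤ (z : ℝ) → (w : ℝ) ≤ c * z → (∀ i, d i ≤ z) →
      (∀ i, 1 + β * Real.log z ≤ (d i : ℝ)) →
      1 - K * (z : ℝ) ^ (-(β * Real.log (1 / c))) ≤
        (Nat.card {ω : ∀ i : Fin w, {T : Finset (Fin z) // T.card = d i} //
            ∃ f : Fin w → Fin z, Function.Injective f ∧
              ∀ i, f i ∈ ((ω i : {T : Finset (Fin z) // T.card = d i}) :
                Finset (Fin z))} : ℝ) /
          (Nat.card (∀ i : Fin w, {T : Finset (Fin z) // T.card = d i}) : ℝ) := by
  set γ := β * log (1 / c) with hγ_def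
  have hγ : 0 < γ := mul_pos hβ (log_pos (one_lt_one_div hc0 hc1))
  refine ⟨2 * exp 1 ^ 2, max (exp (1 / β)) ((2 * exp 1 ^ 2) ^ (1 / γ)), by positivity, ?_⟩
  intro w z d hzC hwz hdz hdlog
  have hz : 0 < (z : ℝ) := (exp_pos _).trans_le ((le_max_left _ _).trans hzC)
  have hlog : 1 ≤ β * log z := by
    have := log_le_log (exp_pos _) ((le_max_left _ _).trans hzC)
    rwa [log_exp, div_le_iff₀ hβ, mul_comm] at this
  have hcz : c ^ (1 + β * log z - 1) = (z : ℝ) ^ (-γ) := by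
    rw [add_sub_cancel_left, rpow_mul_log_comm β hc0 hz, hγ_def, one_div, log_inv, mul_neg, neg_neg]
  have hr : exp 1 ^ 2 * (z : ℝ) ^ (-γ) ≤ 1 / 2 := by
    have hzγ : 2 * exp 1 ^ 2 ≤ (z : ℝ) ^ γ :=
      calc 2 * exp 1 ^ 2 = ((2 * exp 1 ^ 2) ^ (1 / γ)) ^ γ := by
            rw [← rpow_mul (by positivity), one_div_mul_cancel hγ.ne', rpow_one]
        _ ≤ (z : ℝ) ^ γ := rpow_le_rpow (by positivity) ((le_max_right _ _).trans hzC) hγ.le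
    rw [rpow_neg hz.le, ← div_eq_mul_inv, div_le_iff₀ (by positivity)]
    linarith
  have key := one_sub_le_card_hasSaturatingMatching_div (ι := Fin w) (α := Fin z) d hc0 hc1.le
    (by linarith) hdlog (by simpa using hdz) (by simpa using hwz) (hcz ▸ hr)
  rw [hcz] at key
  exact key
end

section
/- Let A ∈ R^{p×q} be a random sparse matrix where column i has d_i ≥ 1 + β log p nonzero entries in uniformly random positions (independently across columns), with generic nonzero values, and q ≤ (cp/n)^n for constants 0 < c < 1 and β > (n−1)/log(1/c). Then krank(A) ≥ cp with probability at least 1 − O(p^{−β'}) where β' = β log(1/c) − (n−1) > 0. -/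
/-!
If every set `S` of at most `c p` columns satisfies Hall's condition `|N(S)| ≥ |S|` for the
support pattern, then `S` is matched injectively into the rows, `j ↦ f j ∈ supp j`; the square
minor on the rows `f(S)` evaluates to the identity at the indicator of the matching, so it is a
nonzero polynomial and the columns in `S` are independent over the generic entries.

Hall's condition fails only if some `s` columns, `2 ≤ s ≤ c p`, have all their supports inside
a set `R` of `s - 1` rows. For fixed `S` and `R` this happens with probability
`∏_{j ∈ S} C(s-1, d_j) / C(p, d_j) ≤ ((s-1)/p)^{(1 + β log p) s}`, and a union bound over the
`C(q, s) C(p, s-1)` pairs gives at most `B^s` with `B = (e²/c) p^{-β'}`; the sum over `s ≥ 2`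
is at most `B` as soon as `2 B ≤ 1`.
-/

open MvPolynomial Finset

section GenericMatrix

variable {ι κ : Type*} [DecidableEq ι]

def HallUpTo (m : ℝ) (T : κ → Finset ι) : Prop :=
  ∀ S : Finset κ, (#S : ℝ) ≤ m → #S ≤ #(S.biUnion T)

variable {R : Type*} [CommRing R] [IsDomain R]

theorem linearIndependent_generic_of_hall (T : κ → Finset ι) (S : Finset κ)
    (hall : ∀ s ⊆ S, #s ≤ #(s.biUnion T)) :
    LinearIndependent (MvPolynomial (ι × κ) R)
      (fun j : S => fun i : ι => if i ∈ T j then (X (i, (j : κ)) : MvPolynomial (ι × κ) R)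
        else 0) := by
  classical
  obtain ⟨f, hf_inj, hf_mem⟩ := (all_card_le_biUnion_card_iff_exists_injective
    (fun j : S => T j)).mp fun s => by
      convert hall (s.map (Function.Embedding.subtype _))
        (fun x hx => by obtain ⟨y, -, rfl⟩ := mem_map.mp hx; exact y.2) using 2
      · simp
      · ext; simp
  set v := fun j : S => fun i : ι =>
    if i ∈ T j then (X (i, (j : κ)) : MvPolynomial (ι × κ) R) else 0
  let M : Matrix S S (MvPolynomial (ι × κ) R) := Matrix.of fun j' j => v j (f j')
  -- at the point supported on the matching `j ↦ (f j, j)`, `M` specializes to the identity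
  let g : ι × κ → R := fun x =>
    if h : x.2 ∈ S then if f ⟨x.2, h⟩ = x.1 then 1 else 0 else 0
  have hM : (eval g).mapMatrix M = 1 := by
    ext j' j
    by_cases hj : j' = j
    · subst hj; simp [M, v, g, hf_mem]
    · simp only [M, v, Matrix.of_apply, RingHom.mapMatrix_apply, Matrix.map_apply,
        Matrix.one_apply_ne hj]
      split_ifs <;> simp [g, hf_inj.eq_iff, Ne.symm hj]
  have hdet : M.det ≠ 0 := fun h => by
    simpa [← RingHom.map_det, hM, h] using RingHom.map_det (eval g) M
  exact LinearIndependent.of_comp (LinearMap.funLeft _ _ f)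
    (Matrix.linearIndependent_cols_of_det_ne_zero hdet)

theorem HallUpTo.linearIndependent_generic {m : ℝ} {T : κ → Finset ι} (h : HallUpTo m T)
    {S : Finset κ} (hS : (#S : ℝ) ≤ m) :
    LinearIndependent (MvPolynomial (ι × κ) R)
      (fun j : S => fun i : ι => if i ∈ T j then (X (i, (j : κ)) : MvPolynomial (ι × κ) R)
        else 0) :=
  linearIndependent_generic_of_hall T S fun s hs =>
    h s ((Nat.cast_le.mpr (card_le_card hs)).trans hS)

end GenericMatrix

theorem Nat.choose_mul_pow_le_choose_mul_pow_s15 {m p : ℕ} (k : ℕ) (h : m ≤ p) :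
    m.choose k * p ^ k ≤ p.choose k * m ^ k := by
  refine Nat.le_of_mul_le_mul_left ?_ k.factorial_pos
  simp only [← mul_assoc, ← Nat.descFactorial_eq_factorial_mul_choose]
  induction k with
  | zero => simp
  | succ k ih =>
    have hstep : (m - k) * p ≤ (p - k) * m := by
      rw [Nat.sub_mul, Nat.sub_mul, mul_comm p m]
      exact Nat.sub_le_sub_left (Nat.mul_le_mul_left k h) (m * p)
    calc m.descFactorial (k + 1) * p ^ (k + 1)
        = ((m - k) * p) * (m.descFactorial k * p ^ k) := by
          rw [Nat.descFactorial_succ, pow_succ]; ring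
      _ ≤ ((p - k) * m) * (p.descFactorial k * m ^ k) := Nat.mul_le_mul hstep ih
      _ = p.descFactorial (k + 1) * m ^ (k + 1) := by
          rw [Nat.descFactorial_succ, pow_succ]; ring

theorem Nat.cast_choose_le_cast_choose_mul_div_pow {m p : ℕ} (k : ℕ) (h : m ≤ p) :
    (m.choose k : ℝ) ≤ p.choose k * ((m : ℝ) / p) ^ k := by
  rcases p.eq_zero_or_pos with rfl | hp
  · obtain rfl : m = 0 := Nat.le_zero.mp h
    cases k <;> simp
  rw [div_pow, mul_div_assoc', le_div_iff₀ (by positivity)]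
  exact_mod_cast Nat.choose_mul_pow_le_choose_mul_pow_s15 k h

abbrev SupportPattern (ι : Type*) {κ : Type*} (d : κ → ℕ) : Type _ :=
  ∀ j, {T : Finset ι // #T = d j}

theorem SupportPattern.nonempty {ι κ : Type*} [Fintype ι] {d : κ → ℕ}
    (hd : ∀ j, d j ≤ Fintype.card ι) : Nonempty (SupportPattern ι d) := by
  choose T _ hT using fun j => exists_subset_card_eq (s := (univ : Finset ι)) (by simpa using hd j)
  exact ⟨fun j => ⟨T j, hT j⟩⟩

section SupportCounting

variable {ι κ : Type*} [Fintype ι] [DecidableEq ι] [Fintype κ] [DecidableEq κ]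

theorem card_filter_coe_subset (R : Finset ι) (k : ℕ) :
    #{T : {T : Finset ι // #T = k} | (T : Finset ι) ⊆ R} = (#R).choose k := by
  rw [← card_powersetCard]
  refine card_nbij (↑) (fun T hT => ?_) (fun _ _ _ _ => Subtype.ext) (fun T hT => ?_)
  · exact mem_powersetCard.mpr ⟨(mem_filter.mp hT).2, T.2⟩
  · obtain ⟨hTR, hT⟩ := mem_powersetCard.mp hT
    exact ⟨⟨T, hT⟩, by simpa using hTR, rfl⟩

theorem card_filter_forall_mem_subset (d : κ → ℕ) (S : Finset κ) (R : Finset ι) :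
    #{ω : SupportPattern ι d | ∀ j ∈ S, (ω j : Finset ι) ⊆ R} =
      ∏ j, if j ∈ S then (#R).choose (d j) else (Fintype.card ι).choose (d j) := by
  have : ({ω : SupportPattern ι d | ∀ j ∈ S, (ω j : Finset ι) ⊆ R} : Finset _) =
      Fintype.piFinset fun j =>
        {T : {T : Finset ι // #T = d j} | j ∈ S → (T : Finset ι) ⊆ R} := by
    ext ω; simp [Fintype.mem_piFinset]
  rw [this, Fintype.card_piFinset]
  refine prod_congr rfl fun j _ => ?_
  split_ifs with hj
  · simpa [hj] using card_filter_coe_subset R (d j)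
  · simp [hj, Fintype.card_finset_len]

theorem card_filter_forall_mem_subset_le (d : κ → ℕ) (S : Finset κ) (R : Finset ι) :
    (#{ω : SupportPattern ι d | ∀ j ∈ S, (ω j : Finset ι) ⊆ R} : ℝ) ≤
      Fintype.card (SupportPattern ι d) *
        ∏ j ∈ S, ((#R : ℝ) / Fintype.card ι) ^ d j := by
  rw [card_filter_forall_mem_subset, Fintype.card_pi, ← Fintype.prod_ite_mem S,
    Nat.cast_prod, Nat.cast_prod, ← prod_mul_distrib]
  refine prod_le_prod (fun _ _ => by positivity) fun j _ => ?_
  split_ifs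
  · simpa [Fintype.card_finset_len] using
      Nat.cast_choose_le_cast_choose_mul_div_pow (d j) (card_le_univ R)
  · simp [Fintype.card_finset_len]

theorem card_filter_forall_mem_subset_le_rpow (d : κ → ℕ) {D : ℝ} (hdD : ∀ j, D ≤ d j)
    (S : Finset κ) {R : Finset ι} (hR : R.Nonempty) :
    (#{ω : SupportPattern ι d | ∀ j ∈ S, (ω j : Finset ι) ⊆ R} : ℝ) ≤
      Fintype.card (SupportPattern ι d) *
        (((#R : ℝ) / Fintype.card ι) ^ D) ^ #S := by
  have hx0 : 0 < (#R : ℝ) / Fintype.card ι :=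
    div_pos (mod_cast hR.card_pos) (mod_cast hR.card_pos.trans_le (card_le_univ R))
  have hx1 : (#R : ℝ) / Fintype.card ι ≤ 1 :=
    div_le_one_of_le₀ (mod_cast card_le_univ R) (by positivity)
  refine (card_filter_forall_mem_subset_le d S R).trans
    (mul_le_mul_of_nonneg_left ?_ (by positivity))
  rw [← prod_const]
  refine prod_le_prod (fun _ _ => by positivity) fun j _ => ?_
  rw [← Real.rpow_natCast]
  exact Real.rpow_le_rpow_of_exponent_ge hx0 hx1 (hdD j)

omit [Fintype κ] [DecidableEq κ] in
theorem exists_superset_card_pred_of_not_hallUpTo {m : ℝ} {T : κ → Finset ι}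
    (hm : m ≤ Fintype.card ι) (hT : ∀ j, (T j).Nonempty) (h : ¬HallUpTo m T) :
    ∃ S : Finset κ, 2 ≤ #S ∧ (#S : ℝ) ≤ m ∧
      ∃ R : Finset ι, #R = #S - 1 ∧ ∀ j ∈ S, T j ⊆ R := by
  simp only [HallUpTo, not_forall, not_le] at h
  obtain ⟨S, hSm, hlt⟩ := h
  have hS : #S ≤ Fintype.card ι := by exact_mod_cast hSm.trans hm
  obtain ⟨j, hj⟩ : S.Nonempty := card_pos.mp (by omega)
  have : 1 ≤ #(S.biUnion T) :=
    (hT j).card_pos.trans_le (card_le_card (subset_biUnion_of_mem T hj))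
  obtain ⟨R, hUR, -, hR⟩ := exists_subsuperset_card_eq (subset_univ (S.biUnion T))
    (by omega : #(S.biUnion T) ≤ #S - 1) (by simp; omega)
  exact ⟨S, by omega, hSm, R, hR, fun j hj => (subset_biUnion_of_mem T hj).trans hUR⟩

open Classical in
theorem card_not_hallUpTo_le (d : κ → ℕ) {m D : ℝ} (hm : m ≤ Fintype.card ι) (hD : 0 < D)
    (hdD : ∀ j, D ≤ d j) :
    (#{ω : SupportPattern ι d | ¬HallUpTo m fun j => (ω j : Finset ι)} : ℝ) ≤
      Fintype.card (SupportPattern ι d) *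
        ∑ s ∈ (Icc 2 (Fintype.card κ)).filter (fun s : ℕ => (s : ℝ) ≤ m),
          (Fintype.card κ).choose s * (Fintype.card ι).choose (s - 1) *
            ((((s : ℝ) - 1) / Fintype.card ι) ^ D) ^ s := by
  set E : Finset κ × Finset ι → Finset (SupportPattern ι d) :=
    fun SR => {ω | ∀ j ∈ SR.1, (ω j : Finset ι) ⊆ SR.2}
  set pairs : ℕ → Finset (Finset κ × Finset ι) :=
    fun s => powersetCard s univ ×ˢ powersetCard (s - 1) univ
  set sizes := (Icc 2 (Fintype.card κ)).filter fun s : ℕ => (s : ℝ) ≤ m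
  have hcover :
      ({ω | ¬HallUpTo m fun j => (ω j : Finset ι)} : Finset (SupportPattern ι d)) ⊆
        sizes.biUnion fun s => (pairs s).biUnion E := by
    intro ω hω
    have hd : ∀ j, (ω j : Finset ι).Nonempty := fun j => by
      rw [← card_pos, (ω j).2]; exact_mod_cast hD.trans_le (hdD j)
    obtain ⟨S, h2, hSm, R, hR, hSR⟩ :=
      exists_superset_card_pred_of_not_hallUpTo hm hd (mem_filter.mp hω).2
    simp only [sizes, mem_biUnion, mem_filter, mem_Icc, pairs, E, mem_product, mem_powersetCard]
    exact ⟨#S, ⟨⟨h2, card_le_univ S⟩, hSm⟩, (S, R),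
      ⟨⟨subset_univ S, rfl⟩, subset_univ R, hR⟩, mem_univ _, hSR⟩
  have hE : ∀ s ∈ Icc 2 (Fintype.card κ), ∀ SR ∈ pairs s, (#(E SR) : ℝ) ≤
      Fintype.card (SupportPattern ι d) *
        ((((s : ℝ) - 1) / Fintype.card ι) ^ D) ^ s := by
    intro s hs SR hSR
    simp only [pairs, mem_product, mem_powersetCard] at hSR
    obtain ⟨⟨-, hS⟩, -, hR⟩ := hSR
    have h2 := (mem_Icc.mp hs).1
    have hRs : (#SR.2 : ℝ) = s - 1 := by rw [hR, Nat.cast_sub (by omega)]; simp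
    simpa [hRs, hS] using card_filter_forall_mem_subset_le_rpow d hdD SR.1
      (card_pos.mp (by omega) : SR.2.Nonempty)
  calc _ ≤ ∑ s ∈ sizes, ∑ SR ∈ pairs s, (#(E SR) : ℝ) := by
        exact_mod_cast (card_le_card hcover).trans
          (card_biUnion_le.trans (sum_le_sum fun _ _ => card_biUnion_le))
    _ ≤ ∑ s ∈ sizes, ∑ SR ∈ pairs s,
          Fintype.card (SupportPattern ι d) *
            ((((s : ℝ) - 1) / Fintype.card ι) ^ D) ^ s :=
        sum_le_sum fun s hs => sum_le_sum (hE s (mem_filter.mp hs).1)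
    _ = _ := by
        rw [mul_sum]
        refine sum_congr rfl fun s _ => ?_
        simp only [pairs, sum_const, card_product, card_powersetCard, card_univ, nsmul_eq_mul]
        push_cast
        ring

end SupportCounting

theorem Nat.cast_choose_le_exp_one_mul_div_pow (n k : ℕ) :
    (n.choose k : ℝ) ≤ (Real.exp 1 * n / k) ^ k := by
  rcases k.eq_zero_or_pos with rfl | hk
  · simp
  calc (n.choose k : ℝ) ≤ n ^ k / k.factorial := Nat.choose_le_pow_div k n
    _ = (n / k) ^ k * (k ^ k / k.factorial) := by rw [div_pow]; field_simp
    _ ≤ (n / k) ^ k * Real.exp k := by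
        gcongr; exact Real.pow_div_factorial_le_exp _ (by positivity) k
    _ = _ := by rw [← Real.exp_one_pow]; ring

theorem Real.rpow_one_add_mul_log_le {x c β p : ℝ} (hx : 0 < x) (hxc : x ≤ c) (hp : 0 < p)
    (hβp : 1 ≤ β * Real.log p) :
    x ^ (1 + β * Real.log p) ≤ x ^ 2 * p ^ (β * Real.log c) / c := by
  have hc : 0 < c := hx.trans_le hxc
  have hswap : c ^ (β * Real.log p) = p ^ (β * Real.log c) := by
    rw [Real.rpow_def_of_pos hc, Real.rpow_def_of_pos hp]; ring_nf
  calc x ^ (1 + β * Real.log p) = x ^ 2 * x ^ (β * Real.log p - 1) := by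
        rw [← Real.rpow_natCast, ← Real.rpow_add hx]; congr 1; ring
    _ ≤ x ^ 2 * c ^ (β * Real.log p - 1) := by
        gcongr
    _ = x ^ 2 * p ^ (β * Real.log c) / c := by
        rw [Real.rpow_sub_one hc.ne', hswap, mul_div_assoc]

theorem choose_mul_choose_mul_rpow_pow_le_s15 {c β : ℝ} {n p q s : ℕ} (hc1 : c < 1)
    (hβp : 1 ≤ β * Real.log p) (hq : (q : ℝ) ≤ p ^ n) (hs : 2 ≤ s)
    (hsp : (s : ℝ) ≤ c * p) :
    (q.choose s : ℝ) * p.choose (s - 1) * ((((s : ℝ) - 1) / p) ^ (1 + β * Real.log p)) ^ s ≤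
      (Real.exp 1 ^ 2 / c * (p : ℝ) ^ (-(β * Real.log (1 / c) - ((n : ℝ) - 1)))) ^ s := by
  have hs' : (2 : ℝ) ≤ s := by exact_mod_cast hs
  have hp : (0 : ℝ) < p := by
    rcases (Nat.cast_nonneg p : (0 : ℝ) ≤ p).eq_or_lt with h | h
    · rw [← h] at hsp; linarith
    · exact h
  have hc : 0 < c := pos_of_mul_pos_left (by linarith : 0 < c * p) hp.le
  set e := Real.exp 1
  set x := ((s : ℝ) - 1) / p
  set P := (p : ℝ) ^ (β * Real.log c)
  have hx : 0 < x := div_pos (by linarith) hp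
  have hxc : x ≤ c := by
    rw [div_le_iff₀ hp]; linarith
  have he : 1 ≤ e / x := by
    rw [one_le_div hx]
    linarith [Real.add_one_le_exp (1 : ℝ)]
  have hchoose_q : (q.choose s : ℝ) ≤ (e * q / s) ^ s :=
    Nat.cast_choose_le_exp_one_mul_div_pow q s
  have hchoose_p : (p.choose (s - 1) : ℝ) ≤ (e / x) ^ s := by
    calc (p.choose (s - 1) : ℝ) ≤ (e * p / (s - 1 : ℕ)) ^ (s - 1) :=
          Nat.cast_choose_le_exp_one_mul_div_pow p (s - 1)
      _ = (e / x) ^ (s - 1) := by rw [Nat.cast_sub (by omega), Nat.cast_one, div_div_eq_mul_div]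
      _ ≤ (e / x) ^ s := pow_le_pow_right₀ he (Nat.sub_le s 1)
  have hqx : q * x / s ≤ p ^ n / p := by
    rw [div_le_div_iff₀ (by positivity) hp, show (q : ℝ) * x * p = q * (s - 1) by
      simp only [x]; field_simp]
    nlinarith [(Nat.cast_nonneg q : (0 : ℝ) ≤ q)]
  have hexp : (p : ℝ) ^ (-(β * Real.log (1 / c) - ((n : ℝ) - 1))) = p ^ n / p * P := by
    rw [one_div, Real.log_inv,
      show -(β * -Real.log c - ((n : ℝ) - 1)) = n - 1 + β * Real.log c by ring,
      Real.rpow_add hp, Real.rpow_sub_one hp.ne', Real.rpow_natCast]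
  calc (q.choose s : ℝ) * p.choose (s - 1) * (x ^ (1 + β * Real.log p)) ^ s
      ≤ (e * q / s) ^ s * (e / x) ^ s * (x ^ 2 * P / c) ^ s := by
        gcongr
        exact Real.rpow_one_add_mul_log_le hx hxc hp hβp
    _ = (e ^ 2 / c * (q * x / s) * P) ^ s := by
        rw [← mul_pow, ← mul_pow]; congr 1; field_simp
    _ ≤ (e ^ 2 / c * (p ^ n / p) * P) ^ s := by gcongr
    _ = _ := by rw [hexp, mul_assoc]

theorem sum_pow_le_of_two_mul_le_one {B : ℝ} (hB0 : 0 ≤ B) (hB : 2 * B ≤ 1) {A : Finset ℕ}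
    {N : ℕ} (hA : A ⊆ Icc 2 N) : ∑ s ∈ A, B ^ s ≤ B := by
  calc ∑ s ∈ A, B ^ s ≤ ∑ s ∈ Ico 2 (N + 1), B ^ s :=
        sum_le_sum_of_subset_of_nonneg (hA.trans fun s hs => by simp at hs ⊢; omega)
          fun _ _ _ => by positivity
    _ ≤ B ^ 2 / (1 - B) := geom_sum_Ico_le_of_lt_one hB0 (by linarith)
    _ ≤ B := by rw [div_le_iff₀ (by linarith)]; nlinarith

theorem Real.one_le_mul_log_of_exp_inv_le {β x : ℝ} (hβ : 0 < β)
    (hx : Real.exp (1 / β) ≤ x) : 1 ≤ β * Real.log x := by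
  have := (Real.le_log_iff_exp_le ((Real.exp_pos _).trans_le hx)).mpr hx
  rwa [div_le_iff₀' hβ] at this

theorem two_mul_mul_rpow_neg_le_one {K a x : ℝ} (hK : 0 < K) (ha : 0 < a)
    (hx : (2 * K) ^ a⁻¹ ≤ x) : 2 * (K * x ^ (-a)) ≤ 1 := by
  have hx0 : 0 < x := (Real.rpow_pos_of_pos (by positivity) _).trans_le hx
  have h2K : 2 * K ≤ x ^ a := by
    simpa [← Real.rpow_mul (by positivity : (0 : ℝ) ≤ 2 * K), ha.ne'] using
      Real.rpow_le_rpow (by positivity) hx ha.le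
  rw [Real.rpow_neg hx0.le, ← mul_assoc, ← div_eq_mul_inv]
  exact div_le_one_of_le₀ h2K (by positivity)

theorem one_sub_le_card_filter_div {Ω : Type*} [Fintype Ω] [Nonempty Ω] (P : Ω → Prop)
    [DecidablePred P] {B : ℝ} (h : (#{ω | ¬P ω} : ℝ) ≤ Fintype.card Ω * B) :
    1 - B ≤ #{ω | P ω} / Fintype.card Ω := by
  have hΩ : (0 : ℝ) < Fintype.card Ω := by exact_mod_cast Fintype.card_pos
  have hsplit : (#{ω | P ω} : ℝ) + #{ω | ¬P ω} = Fintype.card Ω := by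
    exact_mod_cast card_filter_add_card_filter_not P
  rw [le_div_iff₀ hΩ]
  linarith

open Classical in
theorem card_not_hallUpTo_le_mul {c β : ℝ} {n p q : ℕ} (d : Fin q → ℕ) (hc0 : 0 < c)
    (hc1 : c < 1) (hβp : 1 ≤ β * Real.log p) (hq : (q : ℝ) ≤ p ^ n)
    (hdD : ∀ j, 1 + β * Real.log p ≤ d j)
    (hB : 2 * (Real.exp 1 ^ 2 / c * (p : ℝ) ^ (-(β * Real.log (1 / c) - ((n : ℝ) - 1))))
      ≤ 1) :
    (#{ω : SupportPattern (Fin p) d |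
        ¬HallUpTo (c * p) fun j => (ω j : Finset (Fin p))} : ℝ) ≤
      Fintype.card (SupportPattern (Fin p) d) *
        (Real.exp 1 ^ 2 / c * (p : ℝ) ^ (-(β * Real.log (1 / c) - ((n : ℝ) - 1)))) := by
  set B := Real.exp 1 ^ 2 / c * (p : ℝ) ^ (-(β * Real.log (1 / c) - ((n : ℝ) - 1)))
  have hcp : c * p ≤ Fintype.card (Fin p) := by
    rw [Fintype.card_fin]; nlinarith [(Nat.cast_nonneg p : (0 : ℝ) ≤ p)]
  refine (card_not_hallUpTo_le d hcp (by linarith) hdD).trans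
    (mul_le_mul_of_nonneg_left ?_ (Nat.cast_nonneg _))
  simp only [Fintype.card_fin]
  calc _ ≤ ∑ s ∈ (Icc 2 q).filter (fun s : ℕ => (s : ℝ) ≤ c * p), B ^ s :=
        sum_le_sum fun s hs => by
          obtain ⟨hs, hsp⟩ := mem_filter.mp hs
          exact choose_mul_choose_mul_rpow_pow_le_s15 hc1 hβp hq (mem_Icc.mp hs).1 hsp
    _ ≤ B := sum_pow_le_of_two_mul_le_one (by positivity) hB (filter_subset _ _)

/-- Kruskal rank of random sparse matrices, with high probability. The random support of
column `j` is a uniformly random `d j`-subset of the rows, independently across columns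
(a configuration `ω`); genericity of the nonzero values is modeled by placing independent
indeterminates `X (i,j)` on the support. For constants `0 < c < 1`, `n ≥ 1`, and
`β > (n−1)/log(1/c)`, there are constants `K > 0` and `C` such that whenever `p ≥ C`,
`q ≤ (c·p/n)ⁿ`, and `d j ≥ 1 + β log p` for all columns, with probability at least
`1 − K·p^{−β'}` (β' = β log(1/c) − (n−1)) over the random support, every set of at most
`c·p` columns of the generic matrix is linearly independent, i.e. `krank(A) ≥ c·p`. -/
theorem random_krank_whp (c β : ℝ) (n : ℕ) (hc0 : 0 < c) (hc1 : c < 1) (hn : 1 ≤ n)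
    (hβ : ((n : ℝ) - 1) / Real.log (1 / c) < β) :
    ∃ K C : ℝ, 0 < K ∧ ∀ (p q : ℕ) (d : Fin q → ℕ),
      C ≤ (p : ℝ) → (q : ℝ) ≤ (c * p / n) ^ n →
      (∀ j, d j ≤ p) → (∀ j, 1 + β * Real.log p ≤ (d j : ℝ)) →
      1 - K * (p : ℝ) ^ (-(β * Real.log (1 / c) - ((n : ℝ) - 1))) ≤
        (Nat.card {ω : ∀ j : Fin q, {T : Finset (Fin p) // T.card = d j} //
            ∀ S : Finset (Fin q), (S.card : ℝ) ≤ c * p →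
              LinearIndependent (MvPolynomial (Fin p × Fin q) ℝ)
                (fun j : S => fun i : Fin p =>
                  if i ∈ ((ω (j : Fin q) : {T : Finset (Fin p) // T.card = d (j : Fin q)}) :
                      Finset (Fin p))
                  then (MvPolynomial.X (i, (j : Fin q)) : MvPolynomial (Fin p × Fin q) ℝ)
                  else 0)} : ℝ) /
          (Nat.card (∀ j : Fin q, {T : Finset (Fin p) // T.card = d j}) : ℝ) := by
  classical
  set β' := β * Real.log (1 / c) - ((n : ℝ) - 1)
  set K := Real.exp 1 ^ 2 / c
  have hlog : 0 < Real.log (1 / c) := Real.log_pos (one_lt_one_div hc0 hc1)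
  have hβ0 : 0 < β :=
    (div_nonneg (by simpa using (Nat.one_le_cast (α := ℝ)).mpr hn) hlog.le).trans_lt hβ
  have hβ' : 0 < β' := by have := (div_lt_iff₀ hlog).mp hβ; simp only [β']; linarith
  refine ⟨K, max (Real.exp (1 / β)) ((2 * K) ^ β'⁻¹), by positivity,
    fun p q d hpC hq hdp hd => ?_⟩
  have hβp := Real.one_le_mul_log_of_exp_inv_le hβ0 ((le_max_left _ _).trans hpC)
  have hB := two_mul_mul_rpow_neg_le_one (by positivity) hβ' ((le_max_right _ _).trans hpC)
  have hqp : (q : ℝ) ≤ p ^ n := by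
    refine hq.trans (pow_le_pow_left₀ (by positivity) ?_ n)
    calc c * p / n ≤ c * p := div_le_self (by positivity) (Nat.one_le_cast.mpr hn)
      _ ≤ p := by nlinarith
  have := SupportPattern.nonempty (ι := Fin p) (d := d) (by simpa using hdp)
  calc 1 - K * (p : ℝ) ^ (-β')
      ≤ #{ω : SupportPattern (Fin p) d | HallUpTo (c * p) fun j => (ω j : Finset (Fin p))} /
          Fintype.card (SupportPattern (Fin p) d) :=
        one_sub_le_card_filter_div _ (card_not_hallUpTo_le_mul d hc0 hc1 hβp hqp hd hB)
    _ ≤ _ := by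
      rw [Nat.card_eq_fintype_card, Nat.card_eq_fintype_card, Fintype.card_subtype]
      gcongr with ω
      exact fun hHall S hS => hHall.linearIndependent_generic hS
end

section
/- Let A ∈ R^{p×q} with krank(A) = k ≥ 2, and let n ≥ 2. For any vector v ∈ R^q with 2 ≤ ||v||_0 ≤ k, the tensor T = Σ_j v(j) · a_j^{∘n} (the weighted sum of n-th tensor powers of the columns of A in the support of v) has tensor (CP) rank equal to ||v||_0; in particular T is not rank one. -/
/-- The Kruskal rank of `A ∈ ℝ^{p×q}`. -/
noncomputable def krank {p q : ℕ} (A : Matrix (Fin p) (Fin q) ℝ) : ℕ :=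
  sSup {k : ℕ | k ≤ q ∧ ∀ S : Finset (Fin q), S.card = k →
    LinearIndependent ℝ (fun j : S => fun i : Fin p => A i (j : Fin q))}

/-- The CP (tensor) rank of an order-`n` tensor `T ∈ (ℝᵖ)^{⊗n}` (represented as a
function on index tuples): the minimal number of rank-one tensors summing to `T`. -/
noncomputable def cprank {p n : ℕ} (T : (Fin n → Fin p) → ℝ) : ℕ :=
  sInf {m : ℕ | ∃ f : Fin m → Fin n → Fin p → ℝ,
    ∀ t : Fin n → Fin p, T t = ∑ s : Fin m, ∏ k : Fin n, f s k (t k)}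

/-!
The upper bound is the defining decomposition, restricted to the support of `v`. For the lower
bound, the columns `aⱼ` with `v j ≠ 0` are linearly independent (there are at most `krank A` of
them), so they have a dual family `wⱼ`.
Contracting all modes but the first of `T` against `wⱼ` gives `v j • aⱼ`, while contracting a
decomposition `∑ₛ fₛ¹ ⊗ ⋯ ⊗ fₛⁿ` in the same way gives a combination of the first factors `fₛ¹`.
Hence every `aⱼ` lies in the span of the `r` first factors, and linear independence forces
`r ≥ ‖v‖₀`. The contraction isolates `aⱼ` because `(aₗ ⬝ᵥ wⱼ)^(n-1)` is `1` for `l = j` and `0`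
otherwise, which needs `n ≥ 2`.
-/

open Finset Submodule

theorem LinearIndependent.exists_dotProduct_eq_ite {K ι κ : Type*} [Field K] [Fintype ι]
    [DecidableEq ι] [Fintype κ] [DecidableEq κ] {a : ι → κ → K} (ha : LinearIndependent K a) :
    ∃ w : ι → κ → K, ∀ j l, a l ⬝ᵥ w j = if l = j then 1 else 0 := by
  obtain ⟨g, hg⟩ := LinearMap.exists_leftInverse_of_injective (Fintype.linearCombination K a)
    (LinearMap.ker_eq_bot.mpr (linearIndependent_iff_injective_fintypeLinearCombination.mp ha))
  refine ⟨fun j => (dotProductEquiv K κ).symm (LinearMap.proj j ∘ₗ g), fun j l => ?_⟩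
  have hgl : g (a l) = Pi.single l 1 := by
    simpa using LinearMap.congr_fun hg (Pi.single l 1)
  rw [dotProduct_comm, ← dotProductEquiv_apply_apply, LinearEquiv.apply_symm_apply]
  simp [hgl, Pi.single_apply, eq_comm]

theorem LinearIndependent.card_le_of_forall_mem_span_range {K V ι ι' : Type*} [DivisionRing K]
    [AddCommGroup V] [Module K V] [Fintype ι] [Fintype ι'] {b : ι → V}
    (hb : LinearIndependent K b) (g : ι' → V) (h : ∀ j, b j ∈ span K (Set.range g)) :
    Fintype.card ι ≤ Fintype.card ι' := by
  have := Module.Finite.span_of_finite K (Set.finite_range g)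
  have hb' : LinearIndependent K fun j => (⟨b j, h j⟩ : span K (Set.range g)) :=
    .of_comp (span K (Set.range g)).subtype hb
  exact hb'.fintype_card_le_finrank.trans (finrank_range_le_card g)

theorem krank_le_and_linearIndependent {p q : ℕ} (A : Matrix (Fin p) (Fin q) ℝ) :
    krank A ≤ q ∧ ∀ S : Finset (Fin q), S.card = krank A →
      LinearIndependent ℝ (fun j : S => fun i : Fin p => A i (j : Fin q)) := by
  show krank A ∈ {k : ℕ | k ≤ q ∧ ∀ S : Finset (Fin q), S.card = k →
    LinearIndependent ℝ (fun j : S => fun i : Fin p => A i (j : Fin q))}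
  refine Nat.sSup_mem ⟨0, Nat.zero_le q, fun S hS => ?_⟩ ⟨q, fun _ hk => hk.1⟩
  rw [card_eq_zero.mp hS]
  exact linearIndependent_empty_type

theorem linearIndependent_of_card_le_krank {p q : ℕ} (A : Matrix (Fin p) (Fin q) ℝ)
    {P : Fin q → Prop} (hP : Nat.card {j // P j} ≤ krank A) :
    LinearIndependent ℝ fun j : {j // P j} => fun i => A i j := by
  classical
  obtain ⟨hkq, hli⟩ := krank_le_and_linearIndependent A
  obtain ⟨S, hPS, -, hS⟩ := exists_subsuperset_card_eq (subset_univ (univ.filter P))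
    (by simpa [Nat.card_eq_fintype_card, Fintype.card_subtype] using hP) (by simpa using hkq)
  exact (hli S hS).comp (fun j : {j // P j} => (⟨j, hPS (by simpa using j.2)⟩ : S))
    fun j l hjl => by simpa [Subtype.ext_iff] using hjl

theorem cprank_eq_card {p n : ℕ} {ι : Type*} [Fintype ι] {T : (Fin n → Fin p) → ℝ}
    (f : ι → Fin n → Fin p → ℝ) (hf : ∀ t, T t = ∑ s, ∏ k, f s k (t k))
    (hmin : ∀ r (g : Fin r → Fin n → Fin p → ℝ),
      (∀ t, T t = ∑ s, ∏ k, g s k (t k)) → Fintype.card ι ≤ r) :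
    cprank T = Fintype.card ι := by
  let e := Fintype.equivFin ι
  have hmem : Fintype.card ι ∈ {m : ℕ | ∃ g : Fin m → Fin n → Fin p → ℝ,
      ∀ t, T t = ∑ s : Fin m, ∏ k, g s k (t k)} :=
    ⟨fun s => f (e.symm s), fun t => by rw [hf, ← e.symm.sum_comp]⟩
  exact le_antisymm (Nat.sInf_le hmem) (le_csInf ⟨_, hmem⟩ fun r ⟨g, hg⟩ => hmin r g hg)

def tensorPowerSum {R ι κ : Type*} [CommSemiring R] [Fintype ι] {n : ℕ} (v : ι → R)
    (a : ι → κ → R) : (Fin n → κ) → R :=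
  fun t => ∑ j, v j * ∏ k, a j (t k)

theorem tensorPowerSum_eq_sum_support {R ι κ : Type*} [CommSemiring R] [DecidableEq R]
    [Fintype ι] {m : ℕ} (v : ι → R) (a : ι → κ → R) (t : Fin (m + 1) → κ) :
    tensorPowerSum v a t =
      ∑ j : {j // v j ≠ 0}, ∏ k, (if k = 0 then v j • a j else a j) (t k) := by
  have hprod (j : ι) : ∏ k : Fin (m + 1), (if k = 0 then v j • a j else a j) (t k) =
      v j * ∏ k, a j (t k) := by
    simp [Fin.prod_univ_succ, Fin.succ_ne_zero, mul_assoc]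
  simp only [hprod, tensorPowerSum]
  have hzero : ∑ j : {j // ¬v j ≠ 0}, v j * ∏ k, a j (t k) = 0 :=
    Finset.sum_eq_zero fun j _ => by simp [not_not.mp j.2]
  rw [← Fintype.sum_subtype_add_sum_subtype (fun j => v j ≠ 0), hzero, add_zero]

section Contraction

variable {R κ ι : Type*} [CommSemiring R] [Fintype κ] [Fintype ι] {m : ℕ}

def contractTail (T : (Fin (m + 1) → κ) → R) (w : κ → R) : κ → R :=
  fun i => ∑ t : Fin m → κ, T (Fin.cons i t) * ∏ k, w (t k)

theorem contractTail_sum_mul_prod (c : ι → R) (f : ι → Fin (m + 1) → κ → R) (w : κ → R) :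
    contractTail (fun t => ∑ s, c s * ∏ k, f s k (t k)) w =
      ∑ s, (c s * ∏ k : Fin m, f s k.succ ⬝ᵥ w) • f s 0 := by
  funext i
  simp only [contractTail, Fin.prod_univ_succ, Fin.cons_zero, Fin.cons_succ, Finset.sum_mul,
    Finset.sum_apply, Pi.smul_apply, smul_eq_mul, dotProduct, Fintype.prod_sum,
    Finset.prod_mul_distrib, Finset.mul_sum]
  rw [Finset.sum_comm]
  refine Finset.sum_congr rfl fun s _ => Finset.sum_congr rfl fun t _ => ?_
  ring

theorem contractTail_mem_span {T : (Fin (m + 1) → κ) → R} {f : ι → Fin (m + 1) → κ → R}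
    (hT : ∀ t, T t = ∑ s, ∏ k, f s k (t k)) (w : κ → R) :
    contractTail T w ∈ span R (Set.range fun s => f s 0) := by
  have : T = fun t => ∑ s, 1 * ∏ k, f s k (t k) := by
    funext t
    simp [hT]
  rw [this, contractTail_sum_mul_prod]
  exact sum_mem fun s _ => smul_mem _ _ (subset_span ⟨s, rfl⟩)

theorem contractTail_tensorPowerSum (v : ι → R) (a : ι → κ → R) (w : κ → R) :
    contractTail (tensorPowerSum (n := m + 1) v a) w = ∑ j, (v j * (a j ⬝ᵥ w) ^ m) • a j :=
  (contractTail_sum_mul_prod v (fun j _ => a j) w).trans (by simp)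

theorem contractTail_tensorPowerSum_of_dotProduct_eq_ite [DecidableEq ι] (hm : m ≠ 0)
    {v : ι → R} {a : ι → κ → R} {w : κ → R} {j : ι}
    (hw : ∀ l, v l ≠ 0 → a l ⬝ᵥ w = if l = j then 1 else 0) :
    contractTail (tensorPowerSum (n := m + 1) v a) w = v j • a j := by
  rw [contractTail_tensorPowerSum, Finset.sum_eq_single j]
  · by_cases hj : v j = 0
    · simp [hj]
    · simp [hw j hj]
  · intro l _ hlj
    by_cases hl : v l = 0
    · simp [hl]
    · simp [hw l hl, hlj, hm]
  · simp

end Contraction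

theorem card_support_le_of_tensorPowerSum_eq_sum_prod {p m r : ℕ} {ι : Type*} [Fintype ι]
    (hm : m ≠ 0) {v : ι → ℝ} {a : ι → Fin p → ℝ}
    (ha : LinearIndependent ℝ fun j : {j // v j ≠ 0} => a j)
    (f : Fin r → Fin (m + 1) → Fin p → ℝ)
    (hf : ∀ t, tensorPowerSum v a t = ∑ s, ∏ k, f s k (t k)) :
    Fintype.card {j // v j ≠ 0} ≤ r := by
  classical
  obtain ⟨w, hw⟩ := ha.exists_dotProduct_eq_ite
  have hspan (j : {j // v j ≠ 0}) : a j ∈ span ℝ (Set.range fun s => f s 0) := by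
    have hcontract : contractTail (tensorPowerSum v a) (w j) = v j • a j :=
      contractTail_tensorPowerSum_of_dotProduct_eq_ite hm fun l hl => by
        simpa [Subtype.ext_iff] using hw j ⟨l, hl⟩
    have := smul_mem _ (v j)⁻¹ (hcontract ▸ contractTail_mem_span hf (w j))
    rwa [inv_smul_smul₀ j.2] at this
  simpa using ha.card_le_of_forall_mem_span_range _ hspan

theorem cprank_tensorPowerSum {p n : ℕ} {ι : Type*} [Fintype ι] (hn : 2 ≤ n) {v : ι → ℝ}
    {a : ι → Fin p → ℝ} (ha : LinearIndependent ℝ fun j : {j // v j ≠ 0} => a j) :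
    cprank (tensorPowerSum (n := n) v a) = Nat.card {j // v j ≠ 0} := by
  obtain ⟨m, rfl⟩ : ∃ m, n = m + 1 := ⟨n - 1, by omega⟩
  rw [Nat.card_eq_fintype_card]
  exact cprank_eq_card _ (tensorPowerSum_eq_sum_support v a) fun r f hf =>
    card_support_le_of_tensorPowerSum_eq_sum_prod (by omega) ha f hf

theorem cprank_eq_support_size_general {p q n k : ℕ}
    (A : Matrix (Fin p) (Fin q) ℝ) (hk : krank A = k) (hn : 2 ≤ n)
    (v : Fin q → ℝ)
    (hvk : Nat.card {j : Fin q // v j ≠ 0} ≤ k) :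
    cprank (fun t : Fin n → Fin p => ∑ j : Fin q, v j * ∏ i : Fin n, A (t i) j) =
      Nat.card {j : Fin q // v j ≠ 0} :=
  cprank_tensorPowerSum hn (a := A.transpose) (linearIndependent_of_card_le_krank A (hk ▸ hvk))

/-- Let `A ∈ ℝ^{p×q}` with `krank(A) = k ≥ 2` and `n ≥ 2`. For any `v ∈ ℝ^q` with
`2 ≤ ‖v‖₀ ≤ k`, the tensor `T = Σⱼ v(j)·aⱼ^{∘n}` (weighted sum of `n`-th tensor powers of
the columns of `A`) has CP rank exactly `‖v‖₀`; in particular `T` is not rank one. -/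
theorem cprank_eq_support_size {p q n k : ℕ}
    (A : Matrix (Fin p) (Fin q) ℝ) (hk : krank A = k) (hk2 : 2 ≤ k) (hn : 2 ≤ n)
    (v : Fin q → ℝ)
    (hv2 : 2 ≤ Nat.card {j : Fin q // v j ≠ 0})
    (hvk : Nat.card {j : Fin q // v j ≠ 0} ≤ k) :
    cprank (fun t : Fin n → Fin p => ∑ j : Fin q, v j * ∏ i : Fin n, A (t i) j) =
      Nat.card {j : Fin q // v j ≠ 0} :=
  cprank_eq_support_size_general A hk hn v hvk
end
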